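/- arXiv:math/9807011 — 4 statements merged into one kernel-verified Lean document; each statement's English description precedes it below -/
import Mathlib

section
/- Let G be a finite group acting by homeomorphisms on a compact metrizable topological space X, let x₀ ∈ X be a fixed point of the action, and let q : X → X/G denote the quotient map onto the orbit space X/G equipped with the quotient topology. Then the induced homomorphism q_* : π₁(X, x₀) → π₁(X/G, q(x₀)) of fundamental groups is surjective. -/
/-!
Path lifting along the orbit map `Y → Y/G` of a finite group acting on a Hausdorff space, by
induction on `|G|`. Over the image `C` of the fixed-point set the lift is forced, the fibres there
being single points, and it is continuous at `C` because the orbit map is closed. Near a point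
`γ t = [y]` off `C`, a slice at `y` identifies a neighbourhood in `Y/G` with an open set of
`Y/Stab(y)`, and `Stab(y)` is a proper subgroup, so lifts exist locally on `Cᶜ`. Since lifts can
be translated by `G`, local lifts patch together on compact intervals, and then, by exhaustion, on
each component of `Cᶜ`. A loop at `q x₀` then lifts to a path starting and ending at the only
point `x₀` over `q x₀`.
-/

open Set Filter Topology MulAction

theorem exists_seq_of_forall_exists_succ {α : Type*} (P : ℕ → α → Prop) (R : ℕ → α → α → Prop)
    (h₀ : ∃ a, P 0 a) (h : ∀ n a, P n a → ∃ b, P (n + 1) b ∧ R n a b) :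
    ∃ f : ℕ → α, ∀ n, P n (f n) ∧ R n (f n) (f (n + 1)) := by
  obtain ⟨a₀, ha₀⟩ := h₀
  choose next hnext using h
  let F : ∀ n, {a // P n a} := fun n =>
    Nat.rec ⟨a₀, ha₀⟩ (fun n a => ⟨next n a.1 a.2, (hnext n a.1 a.2).1⟩) n
  exact ⟨fun n => (F n).1, fun n => ⟨(F n).2, (hnext n _ _).2⟩⟩

theorem Monotone.exists_eqOn_of_eqOn_succ {α β : Type*} {s : ℕ → Set α} (hs : Monotone s)
    {f : ℕ → α → β} (hf : ∀ n, EqOn (f (n + 1)) (f n) (s n)) :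
    ∃ F : α → β, ∀ n, EqOn F (f n) (s n) := by
  classical
  have hle : ∀ m n, m ≤ n → EqOn (f n) (f m) (s m) := by
    intro m n hmn
    induction n, hmn using Nat.le_induction with
    | base => exact fun _ _ => rfl
    | succ n hmn ih => exact fun x hx => (hf n (hs hmn hx)).trans (ih hx)
  refine ⟨fun x => if h : ∃ n, x ∈ s n then f (Nat.find h) x else f 0 x, fun n x hx => ?_⟩
  have h : ∃ n, x ∈ s n := ⟨n, hx⟩
  simp only [dif_pos h]
  exact (hle _ n (Nat.find_min' h hx) (Nat.find_spec h)).symm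

theorem IsOpen.exists_Icc_exhaustion {K : Set ℝ} (hK : IsOpen K) (hne : K.Nonempty) :
    ∃ c d : ℕ → ℝ, Antitone c ∧ Monotone d ∧ (∀ n, c n ≤ d n ∧ c n ∈ K ∧ d n ∈ K) ∧
      ∀ t ∈ K, ∃ n, t ∈ Ioo (c n) (d n) := by
  have := hne.to_subtype
  obtain ⟨u, hu⟩ := TopologicalSpace.exists_dense_seq K
  have hr (n : ℕ) : (Finset.range (n + 1)).Nonempty := Finset.nonempty_range_add_one
  have hrange {m n : ℕ} (h : m ≤ n) : Finset.range (m + 1) ⊆ Finset.range (n + 1) :=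
    Finset.range_subset_range.2 (by omega)
  set c : ℕ → ℝ := fun n => (Finset.range (n + 1)).inf' (hr n) (fun k => (u k : ℝ))
  set d : ℕ → ℝ := fun n => (Finset.range (n + 1)).sup' (hr n) (fun k => (u k : ℝ))
  have hc (n : ℕ) : ∃ k, c n = u k := by
    obtain ⟨k, -, hk⟩ := Finset.exists_mem_eq_inf' (hr n) (fun k => (u k : ℝ))
    exact ⟨k, hk⟩
  have hd (n : ℕ) : ∃ k, d n = u k := by
    obtain ⟨k, -, hk⟩ := Finset.exists_mem_eq_sup' (hr n) (fun k => (u k : ℝ))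
    exact ⟨k, hk⟩
  have hcu {k n : ℕ} (h : k ≤ n) : c n ≤ u k :=
    Finset.inf'_le _ (Finset.mem_range.2 (by omega))
  have hdu {k n : ℕ} (h : k ≤ n) : u k ≤ d n :=
    Finset.le_sup' (fun k => (u k : ℝ)) (Finset.mem_range.2 (by omega))
  refine ⟨c, d, fun m n h => Finset.inf'_mono _ (hrange h) _,
    fun m n h => Finset.sup'_mono _ (hrange h) _, fun n => ?_, fun t ht => ?_⟩
  · obtain ⟨i, hi⟩ := hc n
    obtain ⟨j, hj⟩ := hd n
    exact ⟨(hcu n.zero_le).trans (hdu n.zero_le), hi ▸ (u i).2, hj ▸ (u j).2⟩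
  obtain ⟨l, r, hlr, hsub⟩ := mem_nhds_iff_exists_Ioo_subset.1 (hK.mem_nhds ht)
  have hdense {p q : ℝ} (hpq : Ioo p q ⊆ Ioo l r) (hne : p < q) : ∃ k, (u k : ℝ) ∈ Ioo p q := by
    obtain ⟨x, hx⟩ := nonempty_Ioo.2 hne
    exact hu.exists_mem_open (isOpen_Ioo.preimage continuous_subtype_val) ⟨⟨x, hsub (hpq hx)⟩, hx⟩
  obtain ⟨i, hi⟩ := hdense (Ioo_subset_Ioo_right hlr.2.le) hlr.1
  obtain ⟨j, hj⟩ := hdense (Ioo_subset_Ioo_left hlr.1.le) hlr.2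
  exact ⟨max i j, (hcu (le_max_left i j)).trans_lt hi.2, hj.1.trans_le (hdu (le_max_right i j))⟩

theorem IsOpen.ordConnectedComponent {U : Set ℝ} (hU : IsOpen U) (t : ℝ) :
    IsOpen (U.ordConnectedComponent t) :=
  isOpen_iff_mem_nhds.2 fun s hs => by
    rw [ordConnectedComponent_eq (mem_ordConnectedComponent.1 hs)]
    exact ordConnectedComponent_mem_nhds.2 (hU.mem_nhds (ordConnectedComponent_subset (by simpa)))

section Lifting

variable {G Y : Type*} [Group G] [MulAction G Y]

theorem exists_smul_eq_of_mk_eq {a b : Y}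
    (h : Quotient.mk (orbitRel G Y) a = Quotient.mk (orbitRel G Y) b) : ∃ g : G, g • b = a :=
  Quotient.exact h

theorem eq_of_mk_eq_of_mem_fixedPoints {a b : Y} (hb : b ∈ fixedPoints G Y)
    (h : Quotient.mk (orbitRel G Y) a = Quotient.mk (orbitRel G Y) b) : a = b := by
  obtain ⟨g, rfl⟩ := exists_smul_eq_of_mk_eq h
  exact hb g

variable [TopologicalSpace Y]

def LiftsOn (γ : ℝ → Quotient (orbitRel G Y)) (s : Set ℝ) (ℓ : ℝ → Y) : Prop :=
  ContinuousOn ℓ s ∧ ∀ t ∈ s, Quotient.mk (orbitRel G Y) (ℓ t) = γ t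

def LiftsLocallyOn (γ : ℝ → Quotient (orbitRel G Y)) (s : Set ℝ) : Prop :=
  ∀ t ∈ s, ∃ N ∈ 𝓝 t, ∃ ℓ, LiftsOn γ N ℓ

variable (G Y) in
def HasPathLifting : Prop :=
  ∀ γ : ℝ → Quotient (orbitRel G Y), Continuous γ →
    ∃ ℓ : ℝ → Y, Continuous ℓ ∧ Quotient.mk (orbitRel G Y) ∘ ℓ = γ

variable {γ : ℝ → Quotient (orbitRel G Y)} {s t : Set ℝ} {ℓ : ℝ → Y}

theorem LiftsOn.mono (h : LiftsOn γ s ℓ) (hts : t ⊆ s) : LiftsOn γ t ℓ :=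
  ⟨h.1.mono hts, fun x hx => h.2 x (hts hx)⟩

theorem LiftsOn.smul [ContinuousConstSMul G Y] (h : LiftsOn γ s ℓ) (g : G) :
    LiftsOn γ s (fun x => g • ℓ x) :=
  ⟨h.1.const_smul g, fun x hx => (Quotient.sound (mem_orbit _ g)).trans (h.2 x hx)⟩

variable {a b c : ℝ} {ℓ₁ ℓ₂ : ℝ → Y}

theorem LiftsOn.glue (hab : a ≤ b) (hbc : b ≤ c) (h₁ : LiftsOn γ (Icc a b) ℓ₁)
    (h₂ : LiftsOn γ (Icc b c) ℓ₂) (hb : ℓ₁ b = ℓ₂ b) :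
    ∃ ℓ, LiftsOn γ (Icc a c) ℓ ∧ EqOn ℓ ℓ₁ (Icc a b) ∧ EqOn ℓ ℓ₂ (Icc b c) := by
  set ℓ : ℝ → Y := fun x => if x ≤ b then ℓ₁ x else ℓ₂ x
  have e₁ : EqOn ℓ ℓ₁ (Icc a b) := fun x hx => if_pos hx.2
  have e₂ : EqOn ℓ ℓ₂ (Icc b c) := fun x hx => by
    rcases hx.1.eq_or_lt with rfl | hbx
    · exact (if_pos le_rfl).trans hb
    · exact if_neg hbx.not_ge
  refine ⟨ℓ, ?_, e₁, e₂⟩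
  rw [← Icc_union_Icc_eq_Icc hab hbc]
  refine ⟨(h₁.1.congr e₁).union_of_isClosed (h₂.1.congr e₂) isClosed_Icc isClosed_Icc, ?_⟩
  rintro x (hx | hx)
  · rw [e₁ hx, h₁.2 x hx]
  · rw [e₂ hx, h₂.2 x hx]

theorem LiftsLocallyOn.mono (hloc : LiftsLocallyOn γ s) (hts : t ⊆ s) : LiftsLocallyOn γ t :=
  fun x hx => hloc x (hts hx)

variable [ContinuousConstSMul G Y]

theorem LiftsOn.exists_extend_right (h₁ : LiftsOn γ (Icc a b) ℓ₁) (h₂ : LiftsOn γ (Icc b c) ℓ₂)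
    (hab : a ≤ b) (hbc : b ≤ c) : ∃ ℓ, LiftsOn γ (Icc a c) ℓ ∧ EqOn ℓ ℓ₁ (Icc a b) := by
  obtain ⟨g, hg⟩ :=
    exists_smul_eq_of_mk_eq ((h₁.2 b ⟨hab, le_rfl⟩).trans (h₂.2 b ⟨le_rfl, hbc⟩).symm)
  obtain ⟨ℓ, hℓ, e₁, -⟩ := h₁.glue hab hbc (h₂.smul g) hg.symm
  exact ⟨ℓ, hℓ, e₁⟩

theorem LiftsOn.exists_extend_left (h₁ : LiftsOn γ (Icc a b) ℓ₁) (h₂ : LiftsOn γ (Icc b c) ℓ₂)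
    (hab : a ≤ b) (hbc : b ≤ c) : ∃ ℓ, LiftsOn γ (Icc a c) ℓ ∧ EqOn ℓ ℓ₂ (Icc b c) := by
  obtain ⟨g, hg⟩ :=
    exists_smul_eq_of_mk_eq ((h₂.2 b ⟨le_rfl, hbc⟩).trans (h₁.2 b ⟨hab, le_rfl⟩).symm)
  obtain ⟨ℓ, hℓ, -, e₂⟩ := (h₁.smul g).glue hab hbc h₂ hg
  exact ⟨ℓ, hℓ, e₂⟩

theorem LiftsLocallyOn.exists_liftsOn_Icc (hloc : LiftsLocallyOn γ s) (hs : s.OrdConnected)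
    (ha : a ∈ s) (hb : b ∈ s) (hab : a ≤ b) : ∃ ℓ, LiftsOn γ (Icc a b) ℓ := by
  refine hs.isPreconnected.induction₂' (fun x y => x ≤ y → ∃ ℓ, LiftsOn γ (Icc x y) ℓ)
    (fun x hx => ?_) (fun x y z _ _ _ hxy hyz hxz => ?_) ha hb hab
  · obtain ⟨N, hN, ℓ, hℓ⟩ := hloc x hx
    obtain ⟨l, u, hx, hlu⟩ := mem_nhds_iff_exists_Ioo_subset.1 hN
    filter_upwards [nhdsWithin_le_nhds (Ioo_mem_nhds hx.1 hx.2)] with y hy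
    exact ⟨fun _ => ⟨ℓ, hℓ.mono ((ordConnected_Ioo.out hx hy).trans hlu)⟩,
      fun _ => ⟨ℓ, hℓ.mono ((ordConnected_Ioo.out hy hx).trans hlu)⟩⟩
  · rcases lt_or_ge y x with hyx | hxy'
    · obtain ⟨ℓ, hℓ⟩ := hyz (hyx.le.trans hxz)
      exact ⟨ℓ, hℓ.mono (Icc_subset_Icc_left hyx.le)⟩
    rcases lt_or_ge z y with hzy | hyz'
    · obtain ⟨ℓ, hℓ⟩ := hxy hxy'
      exact ⟨ℓ, hℓ.mono (Icc_subset_Icc_right hzy.le)⟩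
    obtain ⟨ℓ₁, h₁⟩ := hxy hxy'
    obtain ⟨ℓ₂, h₂⟩ := hyz hyz'
    obtain ⟨ℓ, hℓ, -⟩ := h₁.exists_extend_right h₂ hxy' hyz'
    exact ⟨ℓ, hℓ⟩

theorem LiftsLocallyOn.exists_extend_Icc (hloc : LiftsLocallyOn γ s) (hs : s.OrdConnected)
    {a' b' : ℝ} (h : LiftsOn γ (Icc a b) ℓ) (hab : a ≤ b) (ha' : a' ≤ a) (hb' : b ≤ b')
    (ha's : a' ∈ s) (hb's : b' ∈ s) : ∃ ℓ', LiftsOn γ (Icc a' b') ℓ' ∧ EqOn ℓ' ℓ (Icc a b) := by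
  have has : a ∈ s := hs.out ha's hb's ⟨ha', hab.trans hb'⟩
  have hbs : b ∈ s := hs.out ha's hb's ⟨ha'.trans hab, hb'⟩
  obtain ⟨m₁, hm₁⟩ := hloc.exists_liftsOn_Icc hs ha's has ha'
  obtain ⟨ℓ₁, hℓ₁, e₁⟩ := hm₁.exists_extend_left h ha' hab
  obtain ⟨m₂, hm₂⟩ := hloc.exists_liftsOn_Icc hs hbs hb's hb'
  obtain ⟨ℓ₂, hℓ₂, e₂⟩ := hℓ₁.exists_extend_right hm₂ (ha'.trans hab) hb'
  exact ⟨ℓ₂, hℓ₂, fun x hx => (e₂ ⟨ha'.trans hx.1, hx.2⟩).trans (e₁ hx)⟩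

theorem LiftsLocallyOn.exists_liftsOn_of_ordConnected (hloc : LiftsLocallyOn γ s)
    (hso : IsOpen s) (hs : s.OrdConnected) : ∃ ℓ, LiftsOn γ s ℓ := by
  rcases s.eq_empty_or_nonempty with rfl | hne
  · obtain ⟨y, -⟩ := (γ 0).exists_rep
    exact ⟨fun _ => y, continuousOn_empty _, fun _ => False.elim⟩
  obtain ⟨c, d, hc, hd, hcd, hcover⟩ := hso.exists_Icc_exhaustion hne
  obtain ⟨f, hf⟩ := exists_seq_of_forall_exists_succ
    (fun n ℓ => LiftsOn γ (Icc (c n) (d n)) ℓ) (fun n ℓ ℓ' => EqOn ℓ' ℓ (Icc (c n) (d n)))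
    (hloc.exists_liftsOn_Icc hs (hcd 0).2.1 (hcd 0).2.2 (hcd 0).1)
    (fun n ℓ h => hloc.exists_extend_Icc hs h (hcd n).1 (hc n.le_succ) (hd n.le_succ)
      (hcd (n + 1)).2.1 (hcd (n + 1)).2.2)
  obtain ⟨ℓ, hℓ⟩ := Monotone.exists_eqOn_of_eqOn_succ
    (fun m n h => Icc_subset_Icc (hc h) (hd h)) (fun n => (hf n).2)
  refine ⟨ℓ, fun t ht => ?_, fun t ht => ?_⟩ <;> obtain ⟨n, hn⟩ := hcover t ht
  · refine (((hf n).1.1.continuousAt (Icc_mem_nhds hn.1 hn.2)).congr ?_).continuousWithinAt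
    filter_upwards [Ioo_mem_nhds hn.1 hn.2] with x hx
    exact (hℓ n (Ioo_subset_Icc_self hx)).symm
  · rw [hℓ n (Ioo_subset_Icc_self hn)]
    exact (hf n).1.2 t (Ioo_subset_Icc_self hn)

theorem LiftsLocallyOn.exists_liftsOn_of_isOpen (hloc : LiftsLocallyOn γ s) (hso : IsOpen s) :
    ∃ ℓ, LiftsOn γ s ℓ := by
  have hcomp (K : range s.ordConnectedComponent) : ∃ ℓ, LiftsOn γ K ℓ := by
    obtain ⟨_, t, rfl⟩ := K
    exact (hloc.mono ordConnectedComponent_subset).exists_liftsOn_of_ordConnected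
      (hso.ordConnectedComponent t) inferInstance
  choose ℓ hℓ using hcomp
  refine ⟨fun t => ℓ ⟨_, t, rfl⟩ t, fun t ht => ?_,
    fun t ht => (hℓ _).2 t (self_mem_ordConnectedComponent.2 ht)⟩
  have hK : s.ordConnectedComponent t ∈ 𝓝 t := ordConnectedComponent_mem_nhds.2 (hso.mem_nhds ht)
  refine (((hℓ ⟨_, t, rfl⟩).1.continuousAt hK).congr ?_).continuousWithinAt
  filter_upwards [hK] with u hu
  have : (⟨_, u, rfl⟩ : range s.ordConnectedComponent) = ⟨_, t, rfl⟩ :=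
    Subtype.ext (ordConnectedComponent_eq (mem_ordConnectedComponent.1 hu)).symm
  rw [this]

end Lifting

theorem IsClosedMap.continuousAt_of_continuousAt_comp {α X Z : Type*} [TopologicalSpace α]
    [TopologicalSpace X] [TopologicalSpace Z] {f : X → Z} (hf : IsClosedMap f) {ℓ : α → X}
    {t : α} (hℓ : ContinuousAt (f ∘ ℓ) t) (hfib : ∀ x, f x = f (ℓ t) → x = ℓ t) :
    ContinuousAt ℓ t := by
  refine tendsto_nhds.2 fun V hV hℓV => ?_
  have hW : f (ℓ t) ∈ (f '' Vᶜ)ᶜ := fun ⟨x, hx, hfx⟩ => hx (hfib x hfx ▸ hℓV)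
  filter_upwards [hℓ.preimage_mem_nhds ((hf _ hV.isClosed_compl).isOpen_compl.mem_nhds hW)]
    with s hs
  by_contra h
  exact hs ⟨ℓ s, h, rfl⟩

section FiniteGroup

variable {G Y : Type*} [Group G] [MulAction G Y] [TopologicalSpace Y] [ContinuousConstSMul G Y]

theorem isClosed_fixedPoints_of_continuousConstSMul [T2Space Y] : IsClosed (fixedPoints G Y) := by
  simp only [fixedPoints, ofPred_forall]
  exact isClosed_iInter fun g => isClosed_eq (continuous_const_smul g) continuous_id

variable [Finite G]

theorem isClosedMap_quotient_mk_of_finite : IsClosedMap (Quotient.mk (orbitRel G Y)) := by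
  intro F hF
  rw [← isQuotientMap_quotient_mk'.isClosed_preimage]
  convert isClosed_iUnion_of_finite fun g : G => isClosedMap_smul g F hF using 1
  exact MulAction.quotient_preimage_image_eq_union_mul F

variable [T2Space Y]

theorem exists_isOpen_smul_mem_iff_mem_stabilizer (y : Y) :
    ∃ U : Set Y, IsOpen U ∧ y ∈ U ∧ ∀ u ∈ U, ∀ g : G, g • u ∈ U ↔ g ∈ stabilizer G y := by
  obtain ⟨O, hO, hdisj⟩ := (finite_range fun g : G => g • y).t2_separation
  refine ⟨{u | ∀ g : G, g • u ∈ O (g • y)}, ?_, fun g => (hO _).1,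
    fun u hu g => ⟨fun hgu => ?_, fun hg k => ?_⟩⟩
  · simp only [ofPred_forall]
    exact isOpen_iInter_of_finite fun g => (hO _).2.preimage (continuous_const_smul g)
  · by_contra hg
    have h1 : g • u ∈ O y := by simpa using hgu 1
    exact disjoint_left.1 (hdisj ⟨g, rfl⟩ ⟨1, one_smul G y⟩ hg) (hu g) h1
  · have := hu (k * g)
    rwa [mul_smul, mul_smul, mem_stabilizer_iff.1 hg] at this

/-- `Y/Stab(y) → Y/G` is injective and open on the image of a slice at `y`, so it has a continuous
local inverse there. -/
theorem exists_continuousOn_section_stabilizer (y : Y) :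
    ∃ V ∈ 𝓝 (Quotient.mk (orbitRel G Y) y),
      ∃ σ : Quotient (orbitRel G Y) → Quotient (orbitRel (stabilizer G y) Y), ContinuousOn σ V ∧
        ∀ z ∈ V, ∀ u, σ z = Quotient.mk _ u → Quotient.mk (orbitRel G Y) u = z := by
  set H := stabilizer G y
  have : ContinuousConstSMul H Y := ⟨fun h => continuous_const_smul (h : G)⟩
  obtain ⟨U, hUo, hyU, hU⟩ := exists_isOpen_smul_mem_iff_mem_stabilizer (G := G) y
  let φ : Quotient (orbitRel H Y) → Quotient (orbitRel G Y) :=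
    Quotient.lift (Quotient.mk _) fun _ _ ⟨h, hh⟩ => Quotient.sound ⟨(h : G), hh⟩
  have hφ : Continuous φ := continuous_quot_lift _ continuous_quot_mk
  have hφo : IsOpenMap φ := fun O hO => by
    rw [← Quotient.mk_surjective.image_preimage O, image_image]
    exact isOpenMap_quotient_mk'_mul _ (hO.preimage continuous_quot_mk)
  have hinj : InjOn φ (Quotient.mk _ '' U) := by
    rintro _ ⟨u, hu, rfl⟩ _ ⟨v, hv, rfl⟩ huv
    obtain ⟨g, rfl⟩ := exists_smul_eq_of_mk_eq huv
    exact Quotient.sound ⟨⟨g, (hU v hv g).1 hu⟩, rfl⟩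
  have : Nonempty (Quotient (orbitRel H Y)) := ⟨Quotient.mk _ y⟩
  let e := OpenPartialHomeomorph.ofContinuousOpen (hinj.toPartialEquiv φ _) hφ.continuousOn hφo
    (isOpenMap_quotient_mk'_mul _ hUo)
  refine ⟨e.target, e.open_target.mem_nhds ⟨_, ⟨y, hyU, rfl⟩, rfl⟩, e.symm, e.continuousOn_symm,
    fun z hz u hu => ?_⟩
  calc Quotient.mk _ u = φ (Quotient.mk _ u) := rfl
    _ = φ (e.symm z) := by rw [hu]
    _ = z := e.right_inv hz

theorem exists_liftsOn_nhds_of_hasPathLifting_stabilizer {γ : ℝ → Quotient (orbitRel G Y)}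
    (hγ : Continuous γ) {t : ℝ} {y : Y} (hy : Quotient.mk (orbitRel G Y) y = γ t)
    (hH : HasPathLifting (stabilizer G y) Y) : ∃ N ∈ 𝓝 t, ∃ ℓ, LiftsOn γ N ℓ := by
  obtain ⟨V, hV, σ, hσ, hσV⟩ := exists_continuousOn_section_stabilizer (G := G) y
  obtain ⟨δ, hδ, hsub⟩ : ∃ δ > 0, Icc (t - δ) (t + δ) ⊆ γ ⁻¹' V := by
    simpa [Real.closedBall_eq_Icc] using
      Metric.nhds_basis_closedBall.mem_iff.1 (hγ.continuousAt.preimage_mem_nhds (hy ▸ hV))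
  have htδ : t - δ ≤ t + δ := by linarith
  obtain ⟨ℓ, hℓ, hℓγ⟩ := hH (IccExtend htδ fun s => σ (γ s))
    (hσ.comp_continuous (hγ.comp continuous_subtype_val) fun s => hsub s.2).Icc_extend'
  refine ⟨Icc (t - δ) (t + δ), Icc_mem_nhds (by linarith) (by linarith), ℓ, hℓ.continuousOn,
    fun s hs => hσV _ (hsub hs) _ ?_⟩
  rw [← IccExtend_of_mem htδ (fun s => σ (γ s)) hs]
  exact (congrFun hℓγ s).symm

theorem exists_lift_of_liftsLocallyOn_compl {γ : ℝ → Quotient (orbitRel G Y)} (hγ : Continuous γ)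
    (hloc : LiftsLocallyOn γ (γ ⁻¹' (Quotient.mk _ '' fixedPoints G Y))ᶜ) :
    ∃ ℓ : ℝ → Y, Continuous ℓ ∧ Quotient.mk (orbitRel G Y) ∘ ℓ = γ := by
  classical
  set C := γ ⁻¹' (Quotient.mk (orbitRel G Y) '' fixedPoints G Y)
  have hC : IsClosed C :=
    (isClosedMap_quotient_mk_of_finite _ isClosed_fixedPoints_of_continuousConstSMul).preimage hγ
  obtain ⟨ℓ₀, hℓ₀c, hℓ₀⟩ := hloc.exists_liftsOn_of_isOpen hC.isOpen_compl
  have : Nonempty Y := ⟨(γ 0).out⟩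
  choose! z hzfix hz using fun t (ht : t ∈ C) => ht
  have hlift : Quotient.mk _ ∘ C.piecewise z ℓ₀ = γ := funext fun t => by
    by_cases ht : t ∈ C
    · simp [piecewise_eq_of_mem _ _ _ ht, hz t ht]
    · simp [piecewise_eq_of_notMem _ _ _ ht, hℓ₀ t ht]
  refine ⟨C.piecewise z ℓ₀, continuous_iff_continuousAt.2 fun t => ?_, hlift⟩
  by_cases ht : t ∈ C
  · refine isClosedMap_quotient_mk_of_finite.continuousAt_of_continuousAt_comp
      (hlift ▸ hγ.continuousAt) fun x hx => ?_
    rw [piecewise_eq_of_mem _ _ _ ht] at hx ⊢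
    exact eq_of_mk_eq_of_mem_fixedPoints (hzfix t ht) hx
  · refine (hℓ₀c.continuousAt (hC.isOpen_compl.mem_nhds ht)).congr ?_
    filter_upwards [hC.isOpen_compl.mem_nhds ht] with s hs
    exact (piecewise_eq_of_notMem _ _ _ hs).symm

theorem hasPathLifting : HasPathLifting G Y := by
  induction h : Nat.card G using Nat.strong_induction_on generalizing G with
  | _ n ih =>
  intro γ hγ
  refine exists_lift_of_liftsLocallyOn_compl hγ fun t ht => ?_
  obtain ⟨y, hy⟩ := (γ t).exists_rep
  have : ContinuousConstSMul (stabilizer G y) Y := ⟨fun g => continuous_const_smul (g : G)⟩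
  have hlt : Nat.card (stabilizer G y) < n := h ▸ (Subgroup.card_le_card_group _).lt_of_ne
    fun hcard => ht ⟨y, fun g => ((Subgroup.card_eq_iff_eq_top _).1 hcard ▸ Subgroup.mem_top g :
      g ∈ stabilizer G y), hy⟩
  exact exists_liftsOn_nhds_of_hasPathLifting_stabilizer hγ hy (ih _ hlt rfl)

end FiniteGroup

open CategoryTheory FundamentalGroupoid

theorem fundamentalGroup_map_surjective_of_fixedPoint_general
    {G : Type*} [Group G] [Finite G]
    {X : Type*} [TopologicalSpace X] [TopologicalSpace.MetrizableSpace X]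
    [MulAction G X] [ContinuousConstSMul G X]
    (x₀ : X) (hx₀ : ∀ g : G, g • x₀ = x₀)
    (q : C(X, Quotient (MulAction.orbitRel G X)))
    (hq : ∀ x : X, q x = Quotient.mk (MulAction.orbitRel G X) x) :
    Function.Surjective
      ((Functor.mapAut (FundamentalGroupoid.mk x₀)
          (πₘ (show TopCat.of X ⟶ TopCat.of (Quotient (MulAction.orbitRel G X)) from TopCat.ofHom q))) :
        Aut (FundamentalGroupoid.mk x₀) →*
          Aut (FundamentalGroupoid.mk (q x₀))) := by
  intro b
  obtain ⟨p, hp⟩ := Quotient.exists_rep b.hom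
  obtain ⟨ℓ, hℓc, hℓ⟩ := hasPathLifting (G := G) p.extend p.continuous_extend
  have hfix (t : ℝ) (ht : p.extend t = q x₀) : ℓ t = x₀ :=
    eq_of_mk_eq_of_mem_fixedPoints hx₀ ((congrFun hℓ t).trans (ht.trans (hq x₀)))
  let ℓp : Path x₀ x₀ :=
    { toFun := fun t => ℓ t
      continuous_toFun := hℓc.comp continuous_subtype_val
      source' := hfix 0 p.extend_zero
      target' := hfix 1 p.extend_one }
  have hmap : ℓp.map q.continuous = p := by
    ext t
    simp only [Path.map_coe, Function.comp_apply, hq]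
    exact (congrFun hℓ t).trans (p.extend_extends' t)
  refine ⟨(Groupoid.isoEquivHom _ _).symm (Path.Homotopic.Quotient.mk ℓp), Iso.ext ?_⟩
  rw [← hp, ← hmap]
  rfl

/-- If a finite group `G` acts by homeomorphisms on a compact metrizable space `X` with
fixed point `x₀`, then the quotient map `q : X → X/G` induces a surjection
`π₁(X, x₀) → π₁(X/G, q(x₀))` on fundamental groups. -/
theorem fundamentalGroup_map_surjective_of_fixedPoint
    {G : Type*} [Group G] [Finite G]
    {X : Type*} [TopologicalSpace X] [CompactSpace X] [TopologicalSpace.MetrizableSpace X]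
    [MulAction G X] [ContinuousConstSMul G X]
    (x₀ : X) (hx₀ : ∀ g : G, g • x₀ = x₀)
    (q : C(X, Quotient (MulAction.orbitRel G X)))
    (hq : ∀ x : X, q x = Quotient.mk (MulAction.orbitRel G X) x) :
    Function.Surjective
      ((Functor.mapAut (FundamentalGroupoid.mk x₀)
          (πₘ (show TopCat.of X ⟶ TopCat.of (Quotient (MulAction.orbitRel G X)) from TopCat.ofHom q))) :
        Aut (FundamentalGroupoid.mk x₀) →*
          Aut (FundamentalGroupoid.mk (q x₀))) :=
  fundamentalGroup_map_surjective_of_fixedPoint_general x₀ hx₀ q hq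
end

section
/- Let p be a prime number, let n be a positive integer, and let M be an n×n matrix with complex entries all of which are algebraic integers. Then trace(M^p) − (trace M)^p = p·z for some complex number z that is an algebraic integer. -/
/-!
In characteristic `p` the matrices `X • 1` and `C M` commute, so `charmatrix M ^ p` is
`charmatrix (M ^ p)` with `X` replaced by `X ^ p`. Taking determinants, the characteristic
polynomial of `M ^ p` is the Frobenius twist of that of `M`, and comparing the coefficients
giving the trace yields `trace (M ^ p) = trace M ^ p`. Over an arbitrary commutative ring this
becomes a congruence modulo `p`, which we apply in the ring of algebraic integers.
-/

open Polynomial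

namespace Matrix

variable {R : Type*} [CommRing R] {n : Type*} [Fintype n] [DecidableEq n]

section CharP

variable (p : ℕ) [hp : Fact p.Prime] [CharP R p]

theorem expand_charpoly_pow_char (M : Matrix n n R) :
    expand R p (M ^ p).charpoly = M.charpoly ^ p := by
  cases isEmpty_or_nonempty n
  · simp [charpoly, det_isEmpty]
  have hX : Commute (scalar n (X : R[X])) ((C : R →+* R[X]).mapMatrix M) :=
    scalar_commute _ (fun _ => Commute.all _ _) _
  have hcharmatrix : (charmatrix (M ^ p)).map (expand R p) = charmatrix M ^ p := by
    rw [charmatrix, charmatrix, sub_pow_char_of_commute p hX, ← map_pow, ← map_pow]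
    ext i j
    by_cases hij : i = j <;> simp [hij]
  rw [charpoly, charpoly, ← det_pow, ← hcharmatrix]
  exact (expand R p : R[X] →+* R[X]).map_det _

theorem charpoly_pow_char (M : Matrix n n R) :
    (M ^ p).charpoly = M.charpoly.map (frobenius R p) := by
  apply expand_injective hp.out.pos
  rw [expand_charpoly_pow_char, ← map_expand, map_frobenius_expand]

theorem trace_pow_char (M : Matrix n n R) : trace (M ^ p) = trace M ^ p := by
  cases isEmpty_or_nonempty n
  · simp [trace, hp.out.ne_zero]
  rw [trace_eq_neg_charpoly_coeff, trace_eq_neg_charpoly_coeff, charpoly_pow_char, coeff_map,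
    ← map_neg, frobenius_def]

end CharP

theorem prime_dvd_trace_pow_sub_trace_pow {p : ℕ} (hp : p.Prime) (M : Matrix n n R) :
    (p : R) ∣ trace (M ^ p) - trace M ^ p := by
  have := Fact.mk hp
  rw [← Ideal.mem_span_singleton]
  by_cases hunit : IsUnit (p : R)
  · simp [Ideal.span_singleton_eq_top.mpr hunit]
  have := CharP.quotient R p hunit
  rw [← Ideal.Quotient.eq_zero_iff_mem, map_sub, map_pow, AddMonoidHom.map_trace,
    AddMonoidHom.map_trace, ← RingHom.mapMatrix_apply, map_pow]
  exact sub_eq_zero.mpr (trace_pow_char p _)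

end Matrix

theorem trace_pow_prime_sub_trace_pow_eq_prime_mul_algebraic_integer_general
    (p : ℕ) (hp : p.Prime) (n : ℕ)
    (M : Matrix (Fin n) (Fin n) ℂ) (hM : ∀ i j, IsIntegral ℤ (M i j)) :
    ∃ z : ℂ, IsIntegral ℤ z ∧
      Matrix.trace (M ^ p) - (Matrix.trace M) ^ p = (p : ℂ) * z := by
  let N : Matrix (Fin n) (Fin n) (integralClosure ℤ ℂ) := fun i j => ⟨M i j, hM i j⟩
  obtain ⟨z, hz⟩ := N.prime_dvd_trace_pow_sub_trace_pow hp
  refine ⟨z, z.2, ?_⟩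
  have hval := congrArg (integralClosure ℤ ℂ).val hz
  rwa [map_sub, map_pow, map_mul, map_natCast, AddMonoidHom.map_trace, AddMonoidHom.map_trace,
    ← AlgHom.mapMatrix_apply, map_pow] at hval

/-- For a prime `p` and an `n × n` complex matrix `M` whose entries are all algebraic
integers, `trace(M^p) − (trace M)^p` is `p` times an algebraic integer. -/
theorem trace_pow_prime_sub_trace_pow_eq_prime_mul_algebraic_integer
    (p : ℕ) (hp : p.Prime) (n : ℕ) (hn : 0 < n)
    (M : Matrix (Fin n) (Fin n) ℂ) (hM : ∀ i j, IsIntegral ℤ (M i j)) :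
    ∃ z : ℂ, IsIntegral ℤ z ∧
      Matrix.trace (M ^ p) - (Matrix.trace M) ^ p = (p : ℂ) * z :=
  trace_pow_prime_sub_trace_pow_eq_prime_mul_algebraic_integer_general p hp n M hM
end

section
/- Let p be an odd prime and let A ∈ ℂ be a primitive 2p-th root of unity. Then (Σ_{m=1}^{2p} (−1)^m A^{m²})² = (−1)^{(p−1)/2} · 4p. -/
/-! Since `A ^ p = -1`, the summand `(-1) ^ m * A ^ (m ^ 2)` is `p`-periodic, so the sum over
`1, …, 2p` is twice the sum over one period. Reindexing that period by `m ↦ 2m` (2 is invertible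
mod `p`) turns the summand into `ζ ^ (m ^ 2)` with `ζ = A ^ 4` a primitive `p`-th root of unity:
a quadratic Gauss sum, whose square is `(-1) ^ ((p - 1) / 2) * p`. -/

open Finset

theorem ZMod.sum_range_natCast {M : Type*} [AddCommMonoid M] {n : ℕ} [NeZero n]
    (F : ZMod n → M) : ∑ m ∈ range n, F m = ∑ x, F x :=
  sum_nbij' (↑) ZMod.val (fun _ _ => mem_univ _) (fun x _ => mem_range.2 x.val_lt)
    (fun _ hm => ZMod.val_cast_of_lt (mem_range.1 hm)) (fun x _ => ZMod.natCast_zmod_val x)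
    fun _ _ => rfl

namespace Function.Periodic

variable {M : Type*} [AddCommMonoid M] {f : ℕ → M} {a : ℕ}

theorem sum_Ico_add_eq_sum_range (hf : Periodic f a) (n : ℕ) :
    ∑ m ∈ Ico n (n + a), f m = ∑ m ∈ range a, f m := by
  rw [← Nat.image_Ico_mod, sum_image (Nat.mod_injOn_Ico n a)]
  exact sum_congr rfl fun m _ => (hf.map_mod_nat m).symm

theorem sum_range_mul_eq_nsmul (hf : Periodic f a) (k : ℕ) :
    ∑ m ∈ range (k * a), f m = k • ∑ m ∈ range a, f m := by
  induction k with
  | zero => simp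
  | succ k ih =>
    rw [← sum_range_add_sum_Ico f (Nat.mul_le_mul_right a k.le_succ), ih,
      Nat.succ_mul, hf.sum_Ico_add_eq_sum_range, succ_nsmul]

theorem sum_range_mul_left_eq (hf : Periodic f a) {c : ℕ} (hc : c.Coprime a) :
    ∑ m ∈ range a, f (c * m) = ∑ m ∈ range a, f m := by
  obtain rfl | ha := eq_or_ne a 0
  · simp
  have : NeZero a := ⟨ha⟩
  have hf' : ∀ m : ℕ, f (m : ZMod a).val = f m := fun m => by
    rw [ZMod.val_natCast, hf.map_mod_nat]
  let u := ZMod.unitOfCoprime c hc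
  calc ∑ m ∈ range a, f (c * m)
      = ∑ x : ZMod a, f (u * x : ZMod a).val := by
        rw [← ZMod.sum_range_natCast]
        exact sum_congr rfl fun m _ => by rw [← hf', Nat.cast_mul]; rfl
    _ = ∑ x : ZMod a, f x.val := Fintype.sum_equiv (Units.mulLeft u) _ _ fun _ => rfl
    _ = ∑ m ∈ range a, f m := by
        rw [← ZMod.sum_range_natCast]
        exact sum_congr rfl fun m _ => hf' m

end Function.Periodic

theorem AddChar.sum_apply_sq_eq_gaussSum {F R : Type*} [Field F] [Fintype F] [DecidableEq F]
    [CommRing R] [IsDomain R] (hF : ringChar F ≠ 2) {ψ : AddChar F R} (hψ : ψ ≠ 1) :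
    ∑ x, ψ (x ^ 2) = gaussSum ((quadraticChar F).ringHomComp (Int.castRingHom R)) ψ := by
  have hfiber (a : F) :
      ∑ x with x ^ 2 = a, ψ (x ^ 2) = (quadraticChar F a + 1 : ℤ) • ψ a := by
    rw [sum_congr rfl fun x hx => congrArg ψ (mem_filter.1 hx).2, sum_const,
      ← quadraticChar_card_sqrts hF a, Set.toFinset_ofPred, natCast_zsmul]
  calc ∑ x, ψ (x ^ 2)
      = ∑ a, (quadraticChar F a + 1 : ℤ) • ψ a := by
        rw [← sum_fiberwise univ (· ^ 2)]
        exact sum_congr rfl fun a _ => hfiber a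
    _ = gaussSum ((quadraticChar F).ringHomComp (Int.castRingHom R)) ψ + ∑ a, ψ a := by
        simp only [zsmul_eq_mul, Int.cast_add, Int.cast_one, add_mul, one_mul, sum_add_distrib,
          gaussSum, MulChar.ringHomComp_apply, eq_intCast]
    _ = _ := by rw [AddChar.sum_eq_zero_of_ne_one hψ, add_zero]

theorem IsPrimitiveRoot.sum_range_pow_sq_sq {R : Type*} [CommRing R] [IsDomain R]
    (hR : ringChar R ≠ 2) {p : ℕ} [Fact p.Prime] (hp2 : p ≠ 2) {ζ : R}
    (hζ : IsPrimitiveRoot ζ p) :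
    (∑ m ∈ range p, ζ ^ (m ^ 2)) ^ 2 = (-1) ^ ((p - 1) / 2) * p := by
  have hF : ringChar (ZMod p) ≠ 2 := by rwa [ZMod.ringChar_zmod_n]
  set χ := (quadraticChar (ZMod p)).ringHomComp (Int.castRingHom R)
  set ψ := AddChar.zmodChar p hζ.pow_eq_one
  have hψ : ψ.IsPrimitive := AddChar.zmodChar_primitive_of_primitive_root p hζ
  have hχ : χ ≠ 1 := by
    obtain ⟨a, ha⟩ := quadraticChar_exists_neg_one' hF
    refine MulChar.ne_one_iff.2 ⟨a, ?_⟩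
    simpa [χ, ha] using Ring.neg_one_ne_one_of_char_ne_two hR
  have hsum : ∑ m ∈ range p, ζ ^ (m ^ 2) = gaussSum χ ψ := by
    rw [← AddChar.sum_apply_sq_eq_gaussSum hF (by simpa using hψ one_ne_zero),
      ← ZMod.sum_range_natCast]
    exact sum_congr rfl fun m _ => by rw [← Nat.cast_pow, AddChar.zmodChar_apply']
  have hχneg : χ (-1) = (-1) ^ ((p - 1) / 2) := by
    have hp : p % 2 = 1 := Nat.odd_iff.1 <| (Fact.out : p.Prime).odd_of_ne_two hp2
    simp [χ, quadraticChar_neg_one hF, ZMod.χ₄_eq_neg_one_pow hp,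
      show p / 2 = (p - 1) / 2 by omega]
  rw [hsum, gaussSum_sq hχ ((quadraticChar_isQuadratic _).comp _) hψ, hχneg, ZMod.card]

/-- Gauss sum evaluation: for an odd prime `p` and a primitive `2p`-th root of unity `A`,
`(Σ_{m=1}^{2p} (−1)^m A^{m²})² = (−1)^{(p−1)/2} · 4p`. -/
theorem gauss_sum_sq_eq (p : ℕ) (hp : p.Prime) (hodd : Odd p) (A : ℂ)
    (hA : IsPrimitiveRoot A (2 * p)) :
    (∑ m ∈ Finset.Icc 1 (2 * p), (-1 : ℂ) ^ m * A ^ (m ^ 2)) ^ 2 =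
      (-1 : ℂ) ^ ((p - 1) / 2) * (4 * p) := by
  have : Fact p.Prime := ⟨hp⟩
  have h2p : 0 < 2 * p := Nat.mul_pos two_pos hp.pos
  have hAp : A ^ p = -1 := (hA.pow h2p (mul_comm 2 p)).eq_neg_one_of_two_right
  set f : ℕ → ℂ := fun m => (-1) ^ m * A ^ (m ^ 2)
  have hper : Function.Periodic f p := fun m => by
    simp only [f, show (m + p) ^ 2 = m ^ 2 + p * (2 * m) + p * p by ring, pow_add, pow_mul, hAp,
      hodd.neg_one_pow, neg_one_sq, one_pow]
    ring
  have hcop : Nat.Coprime 2 p := Nat.coprime_two_left.2 hodd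
  have hζ : IsPrimitiveRoot (A ^ 4) p := by
    simpa only [← pow_mul] using (hA.pow h2p rfl).pow_of_coprime 2 hcop
  have hper2 : Function.Periodic f (2 * p) := hper.nsmul 2
  have hperiod : ∑ m ∈ Icc 1 (2 * p), f m = 2 • ∑ m ∈ range p, f m := by
    rw [← Ico_add_one_right_eq_Icc, add_comm, hper2.sum_Ico_add_eq_sum_range,
      hper.sum_range_mul_eq_nsmul]
  have hdouble : ∑ m ∈ range p, f m = ∑ m ∈ range p, (A ^ 4) ^ (m ^ 2) := by
    rw [← hper.sum_range_mul_left_eq hcop]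
    refine sum_congr rfl fun m _ => ?_
    simp only [f]
    rw [pow_mul, neg_one_sq, one_pow, one_mul, ← pow_mul]
    ring_nf
  have hchar : ringChar ℂ ≠ 2 := by rw [ringChar.eq_zero]; norm_num
  have hp2 : p ≠ 2 := by rintro rfl; exact Nat.not_odd_iff_even.2 even_two hodd
  rw [hperiod, hdouble, nsmul_eq_mul, mul_pow, hζ.sum_range_pow_sq_sq hchar hp2]
  push_cast
  ring
end

section
/- Let p be an odd prime, let A ∈ ℂ be a primitive 2p-th root of unity, and let κ ∈ ℂ be a root of unity. If a complex number x lies both in the subring ℤ[A, κ] of ℂ and in the subring ℤ[A, 1/p] of ℂ, then x lies in the subring ℤ[A]. -/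
/-!
Since `p` is odd, `-A` is a primitive `p`-th root of unity and `ℤ[A] = ℤ[-A]`. An element of
`ℤ[A, κ]` is a polynomial in roots of unity, hence an algebraic integer, and an element of
`ℤ[A, 1/p]` lies in the cyclotomic field `ℚ(-A)`. The ring of integers of `ℚ(ζ_p)` is `ℤ[ζ_p]`.
-/

open IntermediateField

theorem isIntegral_of_pow_eq_one {R S : Type*} [CommRing R] [Ring S] [Algebra R S] {z : S}
    {m : ℕ} (hm : 0 < m) (hz : z ^ m = 1) : IsIntegral R z :=
  ⟨Polynomial.X ^ m - 1, Polynomial.monic_X_pow_sub_C 1 hm.ne', by simp [hz]⟩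

theorem Algebra.adjoin_singleton_neg (R : Type*) {S : Type*} [CommRing R] [Ring S] [Algebra R S]
    (x : S) : Algebra.adjoin R {-x} = Algebra.adjoin R {x} := by
  refine le_antisymm (Algebra.adjoin_le ?_) (Algebra.adjoin_le ?_) <;>
    simp only [Set.singleton_subset_iff, SetLike.mem_coe]
  · exact neg_mem (Algebra.self_mem_adjoin_singleton R x)
  · simpa using neg_mem (Algebra.self_mem_adjoin_singleton R (-x))

theorem IsPrimitiveRoot.neg_of_odd {R : Type*} [CommRing R] [NoZeroDivisors R] {ζ : R} {k : ℕ}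
    (hζ : IsPrimitiveRoot ζ (2 * k)) (hk : Odd k) : IsPrimitiveRoot (-ζ) k where
  pow_eq_one := by
    have hζk : ζ ^ k = -1 :=
      (hζ.pow (by have := hk.pos; positivity) (mul_comm 2 k)).eq_neg_one_of_two_right
    rw [neg_pow, hζk, hk.neg_one_pow, neg_one_mul, neg_neg]
  dvd_of_pow_eq_one l hl := by
    have : ζ ^ (2 * l) = 1 := by rw [pow_mul, ← neg_sq, ← pow_mul, mul_comm, pow_mul, hl, one_pow]
    exact Nat.dvd_of_mul_dvd_mul_left two_pos (hζ.dvd_of_pow_eq_one _ this)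

theorem IsPrimitiveRoot.isCyclotomicExtension_adjoin_simple
    {K L : Type*} [Field K] [Field L] [Algebra K L] {n : ℕ} [NeZero n] {ζ : L}
    (hζ : IsPrimitiveRoot ζ n) : IsCyclotomicExtension {n} K K⟮ζ⟯ := by
  change IsCyclotomicExtension {n} K K⟮ζ⟯.toSubalgebra
  rw [adjoin_simple_toSubalgebra_of_isAlgebraic
    (isIntegral_of_pow_eq_one (NeZero.pos n) hζ.pow_eq_one).isAlgebraic]
  exact hζ.adjoin_isCyclotomicExtension K

theorem IsPrimitiveRoot.mem_adjoin_int_of_mem_adjoin_rat_of_isIntegral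
    {L : Type*} [Field L] [CharZero L] {p : ℕ} [Fact p.Prime] {ζ : L} (hζ : IsPrimitiveRoot ζ p)
    {x : L} (hxK : x ∈ ℚ⟮ζ⟯) (hx : IsIntegral ℤ x) : x ∈ Algebra.adjoin ℤ {ζ} := by
  have : IsCyclotomicExtension {p} ℚ ℚ⟮ζ⟯ := hζ.isCyclotomicExtension_adjoin_simple
  have hgen : IsPrimitiveRoot (AdjoinSimple.gen ℚ ζ) p :=
    IsPrimitiveRoot.coe_submonoidClass_iff.mp hζ
  have hclosure := IsCyclotomicExtension.Rat.isIntegralClosure_adjoin_singleton_of_prime hgen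
  obtain ⟨y, hy⟩ := hclosure.isIntegral_iff.mp
    ((isIntegral_algebraMap_iff (x := (⟨x, hxK⟩ : ℚ⟮ζ⟯)) Subtype.val_injective).mp hx)
  have hmap : x ∈ (Algebra.adjoin ℤ {AdjoinSimple.gen ℚ ζ}).map (ℚ⟮ζ⟯.val.restrictScalars ℤ) :=
    ⟨y, y.2, congrArg Subtype.val hy⟩
  rwa [AlgHom.map_adjoin_singleton] at hmap

/-- For an odd prime `p`, a primitive `2p`-th root of unity `A`, and a root of unity `κ`,
`ℤ[A, κ] ∩ ℤ[A, 1/p] = ℤ[A]` inside `ℂ`. -/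
theorem mem_adjoin_of_mem_adjoin_root_of_unity_of_mem_adjoin_inv_prime
    (p : ℕ) (hp : p.Prime) (hodd : Odd p) (A κ : ℂ)
    (hA : IsPrimitiveRoot A (2 * p))
    (hκ : ∃ m : ℕ, 0 < m ∧ κ ^ m = 1)
    (x : ℂ)
    (hx₁ : x ∈ Algebra.adjoin ℤ ({A, κ} : Set ℂ))
    (hx₂ : x ∈ Algebra.adjoin ℤ ({A, (p : ℂ)⁻¹} : Set ℂ)) :
    x ∈ Algebra.adjoin ℤ ({A} : Set ℂ) := by
  have : Fact p.Prime := ⟨hp⟩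
  obtain ⟨m, hm, hκm⟩ := hκ
  have hζ : IsPrimitiveRoot (-A) p := hA.neg_of_odd hodd
  have hx_integral : IsIntegral ℤ x := by
    refine Algebra.adjoin_le (S := integralClosure ℤ ℂ) ?_ hx₁
    refine Set.insert_subset_iff.mpr ⟨?_, Set.singleton_subset_iff.mpr ?_⟩
    · exact hA.isIntegral (by have := hp.pos; omega)
    · exact isIntegral_of_pow_eq_one hm hκm
  have hx_field : x ∈ ℚ⟮-A⟯ := by
    refine Algebra.adjoin_le (S := ℚ⟮-A⟯.toSubalgebra.restrictScalars ℤ) ?_ hx₂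
    refine Set.insert_subset_iff.mpr ⟨?_, Set.singleton_subset_iff.mpr ?_⟩
    · simpa using neg_mem (mem_adjoin_simple_self ℚ (-A))
    · exact ℚ⟮-A⟯.inv_mem (ℚ⟮-A⟯.natCast_mem p)
  rw [← Algebra.adjoin_singleton_neg]
  exact hζ.mem_adjoin_int_of_mem_adjoin_rat_of_isIntegral hx_field hx_integral
end
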